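/- arXiv:1311.4452 — 2 statements merged into one kernel-verified Lean document; each statement's English description precedes it below -/
import Mathlib

section
/- Let Ω ⊂ ℝⁿ be a bounded measurable set, C > 0, and let φ₁, …, φ_N be an orthonormal system in L²(ℝⁿ) with supp(φ_j) ⊆ Ω and |φ_j(x)|² ≤ C a.e. for all j. Then for every nonnegative measurable f on ℝⁿ × ℝⁿ, ∑_{j=1}^N ∫∫ f(x,k)|φ_j(x)|²|φ̂_j(k)|² dx dk ≤ C |Ω| (2π)⁻ⁿ ∫_{Ω×ℝⁿ} f(x,k) dx dk. -/
/-!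
For fixed `k`, the plane wave `e_k(y) = exp(i⟨k,y⟩)` restricted to `Ω` lies in `L²` with
`‖1_Ω e_k‖² = |Ω|`, and `(2π)^{n/2} φ̂_j(k)` is the conjugate of `⟪φ_j, 1_Ω e_k⟫` because `φ_j`
vanishes off `Ω`. Bessel's inequality therefore gives `∑_j |φ̂_j(k)|² ≤ (2π)⁻ⁿ |Ω|` for every `k`.
Together with `|φ_j(x)|² ≤ C` this bounds the phase-space density `∑_j |φ_j(x)|² |φ̂_j(k)|²` by
`C |Ω| (2π)⁻ⁿ` on `Ω × ℝⁿ`, and the density vanishes for `x ∉ Ω`; integrating against `f` gives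
the claim.
-/

open MeasureTheory Real Set

/-- The Fourier transform with convention `(2π)^{-n/2} ∫ φ(x) e^{-i⟨k,x⟩} dx`. -/
noncomputable def ft (n : ℕ) (φ : (Fin n → ℝ) → ℂ) (k : Fin n → ℝ) : ℂ :=
  ((2 * π : ℝ) ^ (-(n : ℝ) / 2) : ℝ) •
    ∫ x : Fin n → ℝ, φ x * Complex.exp (-Complex.I * ((∑ j, k j * x j : ℝ) : ℂ))

open ComplexConjugate

section Bessel

variable {α ι : Type*} [MeasurableSpace α] {μ : Measure α}

theorem inner_toLp_eq_integral_conj_mul {φ ψ : α → ℂ} (hφ : MemLp φ 2 μ) (hψ : MemLp ψ 2 μ) :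
    inner ℂ (hφ.toLp φ) (hψ.toLp ψ) = ∫ x, conj (φ x) * ψ x ∂μ := by
  rw [L2.inner_def]
  refine integral_congr_ae ?_
  filter_upwards [hφ.coeFn_toLp, hψ.coeFn_toLp] with x hφx hψx
  rw [hφx, hψx, RCLike.inner_apply, mul_comm]

theorem norm_toLp_sq_eq_integral {g : α → ℂ} (hg : MemLp g 2 μ) :
    ‖hg.toLp g‖ ^ 2 = ∫ x, ‖g x‖ ^ 2 ∂μ := by
  rw [← inner_self_eq_norm_sq (𝕜 := ℂ), inner_toLp_eq_integral_conj_mul]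
  simp_rw [Complex.conj_mul']
  norm_cast

theorem sum_norm_integral_mul_conj_sq_le [Fintype ι] [DecidableEq ι] {φ : ι → α → ℂ}
    (hφ : ∀ i, MemLp (φ i) 2 μ)
    (horth : ∀ i j, ∫ x, conj (φ i x) * φ j x ∂μ = if i = j then 1 else 0)
    {g : α → ℂ} (hg : MemLp g 2 μ) :
    ∑ i, ‖∫ x, φ i x * conj (g x) ∂μ‖ ^ 2 ≤ ∫ x, ‖g x‖ ^ 2 ∂μ := by
  have hon : Orthonormal ℂ fun i => (hφ i).toLp (φ i) := by
    rw [orthonormal_iff_ite]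
    intro i j
    rw [inner_toLp_eq_integral_conj_mul, horth]
  calc ∑ i, ‖∫ x, φ i x * conj (g x) ∂μ‖ ^ 2
      = ∑ i, ‖inner ℂ ((hφ i).toLp (φ i)) (hg.toLp g)‖ ^ 2 := by
        refine Finset.sum_congr rfl fun i _ => ?_
        rw [inner_toLp_eq_integral_conj_mul, ← RCLike.norm_conj, ← integral_conj]
        simp only [map_mul, RCLike.conj_conj, mul_comm]
    _ ≤ ‖hg.toLp g‖ ^ 2 := hon.sum_inner_products_le _
    _ = ∫ x, ‖g x‖ ^ 2 ∂μ := norm_toLp_sq_eq_integral hg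

/-- Bessel's inequality tested against `1_s * conj u`. -/
theorem sum_norm_integral_mul_unimodular_sq_le [Fintype ι] [DecidableEq ι] {φ : ι → α → ℂ}
    (hφ : ∀ i, MemLp (φ i) 2 μ)
    (horth : ∀ i j, ∫ x, conj (φ i x) * φ j x ∂μ = if i = j then 1 else 0)
    {s : Set α} (hs : MeasurableSet s) (hμs : μ s ≠ ⊤)
    (hsupp : ∀ i, Function.support (φ i) ⊆ s)
    {u : α → ℂ} (hu : AEStronglyMeasurable u μ) (hu1 : ∀ x ∈ s, ‖u x‖ = 1) :
    ∑ i, ‖∫ x, φ i x * u x ∂μ‖ ^ 2 ≤ μ.real s := by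
  set g : α → ℂ := s.indicator fun x => conj (u x)
  have hg_norm : ∀ x, ‖g x‖ = s.indicator 1 x := fun x => by
    by_cases hx : x ∈ s <;> simp [g, hx, hu1 x]
  have hg : MemLp g 2 μ :=
    (memLp_indicator_const 2 hs (1 : ℝ) (Or.inr hμs)).mono
      ((continuous_star.comp_aestronglyMeasurable hu).indicator hs)
      (ae_of_all _ fun x => by rw [hg_norm]; exact Real.le_norm_self _)
  have hφg : ∀ i x, φ i x * conj (g x) = φ i x * u x := fun i x => by
    by_cases hx : x ∈ s
    · simp [g, hx]
    · simp [Function.notMem_support.mp fun h => hx (hsupp i h)]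
  calc ∑ i, ‖∫ x, φ i x * u x ∂μ‖ ^ 2
      = ∑ i, ‖∫ x, φ i x * conj (g x) ∂μ‖ ^ 2 := by simp only [hφg]
    _ ≤ ∫ x, ‖g x‖ ^ 2 ∂μ := sum_norm_integral_mul_conj_sq_le hφ horth hg
    _ = ∫ x, s.indicator 1 x ∂μ := by
        congr with x
        rw [hg_norm]
        by_cases hx : x ∈ s <;> simp [hx]
    _ = μ.real s := integral_indicator_one hs

end Bessel

theorem sum_lintegral_le_lintegral_sum {α ι : Type*} [MeasurableSpace α] (μ : Measure α)
    (s : Finset ι) (h : ι → α → ENNReal) :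
    ∑ i ∈ s, ∫⁻ a, h i a ∂μ ≤ ∫⁻ a, ∑ i ∈ s, h i a ∂μ := by
  classical
  induction s using Finset.induction with
  | empty => simp
  | insert i s hi ih =>
    simp only [Finset.sum_insert hi]
    exact (add_le_add_right ih _).trans (le_lintegral_add _ _)

theorem norm_ft_sq (n : ℕ) (φ : (Fin n → ℝ) → ℂ) (k : Fin n → ℝ) :
    ‖ft n φ k‖ ^ 2 = (2 * π) ^ (-(n : ℝ)) *
      ‖∫ x, φ x * Complex.exp (-Complex.I * ((∑ j, k j * x j : ℝ) : ℂ))‖ ^ 2 := by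
  have h2π : ((2 * π) ^ (-(n : ℝ) / 2)) ^ 2 = (2 * π) ^ (-(n : ℝ)) := by
    rw [← rpow_natCast, ← rpow_mul (by positivity)]
    norm_num
  rw [ft, norm_smul, mul_pow, Real.norm_eq_abs, sq_abs, h2π]

theorem sum_norm_ft_sq_le {n : ℕ} {ι : Type*} [Fintype ι] [DecidableEq ι]
    {Ω : Set (Fin n → ℝ)} (hΩm : MeasurableSet Ω) (hΩfin : volume Ω ≠ ⊤)
    {φ : ι → (Fin n → ℝ) → ℂ} (hL2 : ∀ j, MemLp (φ j) 2 volume)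
    (horth : ∀ i j, ∫ x, conj (φ i x) * φ j x = if i = j then 1 else 0)
    (hsupp : ∀ j, Function.support (φ j) ⊆ Ω) (k : Fin n → ℝ) :
    ∑ j, ‖ft n (φ j) k‖ ^ 2 ≤ (2 * π) ^ (-(n : ℝ)) * volume.real Ω := by
  have hwave : ∀ x : Fin n → ℝ,
      ‖Complex.exp (-Complex.I * ((∑ j, k j * x j : ℝ) : ℂ))‖ = 1 := fun x => by
    rw [neg_mul, ← mul_neg, ← Complex.ofReal_neg, Complex.norm_exp_I_mul_ofReal]
  simp_rw [norm_ft_sq, ← Finset.mul_sum]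
  gcongr
  exact sum_norm_integral_mul_unimodular_sq_le hL2 horth hΩm hΩfin hsupp
    (by fun_prop : Continuous _).aestronglyMeasurable fun x _ => hwave x

theorem sum_norm_sq_mul_norm_ft_sq_le {n : ℕ} {ι : Type*} [Fintype ι] [DecidableEq ι]
    {Ω : Set (Fin n → ℝ)} (hΩm : MeasurableSet Ω) (hΩfin : volume Ω ≠ ⊤)
    {φ : ι → (Fin n → ℝ) → ℂ} (hL2 : ∀ j, MemLp (φ j) 2 volume)
    (horth : ∀ i j, ∫ x, conj (φ i x) * φ j x = if i = j then 1 else 0)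
    (hsupp : ∀ j, Function.support (φ j) ⊆ Ω) {C : ℝ} (hC : 0 ≤ C) {x : Fin n → ℝ}
    (hx : ∀ j, ‖φ j x‖ ^ 2 ≤ C) (k : Fin n → ℝ) :
    ∑ j, ‖φ j x‖ ^ 2 * ‖ft n (φ j) k‖ ^ 2 ≤ C * ((2 * π) ^ (-(n : ℝ)) * volume.real Ω) :=
  calc ∑ j, ‖φ j x‖ ^ 2 * ‖ft n (φ j) k‖ ^ 2
      ≤ ∑ j, C * ‖ft n (φ j) k‖ ^ 2 := by gcongr with j; exact hx j
    _ = C * ∑ j, ‖ft n (φ j) k‖ ^ 2 := (Finset.mul_sum _ _ _).symm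
    _ ≤ C * ((2 * π) ^ (-(n : ℝ)) * volume.real Ω) := by
        gcongr; exact sum_norm_ft_sq_le hΩm hΩfin hL2 horth hsupp k

theorem stmt_12_general (n N : ℕ) (Ω : Set (Fin n → ℝ)) (hΩm : MeasurableSet Ω)
    (hΩb : Bornology.IsBounded Ω) (C : ℝ) (hC : 0 < C)
    (φ : Fin N → (Fin n → ℝ) → ℂ)
    (hL2 : ∀ j, MemLp (φ j) 2 (volume : Measure (Fin n → ℝ)))
    (horth : ∀ i j, (∫ x : Fin n → ℝ, (starRingEnd ℂ) (φ i x) * φ j x)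
        = if i = j then 1 else 0)
    (hsupp : ∀ j, Function.support (φ j) ⊆ Ω)
    (hbound : ∀ j, ∀ᵐ x ∂(volume : Measure (Fin n → ℝ)), ‖φ j x‖ ^ 2 ≤ C)
    (f : (Fin n → ℝ) × (Fin n → ℝ) → ℝ) (hf : Measurable f) :
    ∑ j, ∫⁻ p : (Fin n → ℝ) × (Fin n → ℝ),
        ENNReal.ofReal (f p) * ENNReal.ofReal (‖φ j p.1‖ ^ 2 * ‖ft n (φ j) p.2‖ ^ 2)
      ≤ ENNReal.ofReal C * volume Ω * ENNReal.ofReal ((2 * π) ^ (-(n : ℝ))) *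
        ∫⁻ p in Ω ×ˢ (Set.univ : Set (Fin n → ℝ)), ENNReal.ofReal (f p) := by
  have hΩfin : volume Ω ≠ ⊤ := hΩb.measure_lt_top.ne
  set c := ENNReal.ofReal C * volume Ω * ENNReal.ofReal ((2 * π) ^ (-(n : ℝ)))
  have hbound' : ∀ᵐ p : (Fin n → ℝ) × (Fin n → ℝ), ∀ j, ‖φ j p.1‖ ^ 2 ≤ C := by
    rw [ae_all_iff, Measure.volume_eq_prod]
    exact fun j => Measure.quasiMeasurePreserving_fst.ae (hbound j)
  have hdensity : ∀ᵐ p : (Fin n → ℝ) × (Fin n → ℝ),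
      ∑ j, ENNReal.ofReal (f p) * ENNReal.ofReal (‖φ j p.1‖ ^ 2 * ‖ft n (φ j) p.2‖ ^ 2)
        ≤ (Ω ×ˢ univ).indicator (fun q => c * ENNReal.ofReal (f q)) p := by
    filter_upwards [hbound'] with ⟨x, k⟩ hx
    by_cases hxΩ : x ∈ Ω
    · rw [indicator_of_mem (mk_mem_prod hxΩ (mem_univ k)), ← Finset.mul_sum, mul_comm c,
        ← ENNReal.ofReal_sum_of_nonneg fun j _ => by positivity]
      gcongr
      calc ENNReal.ofReal (∑ j, ‖φ j x‖ ^ 2 * ‖ft n (φ j) k‖ ^ 2)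
          ≤ ENNReal.ofReal (C * ((2 * π) ^ (-(n : ℝ)) * volume.real Ω)) :=
            ENNReal.ofReal_le_ofReal
              (sum_norm_sq_mul_norm_ft_sq_le hΩm hΩfin hL2 horth hsupp hC.le hx k)
        _ = c := by
            rw [ENNReal.ofReal_mul hC.le, ENNReal.ofReal_mul (by positivity),
              ofReal_measureReal hΩfin, mul_comm (ENNReal.ofReal _) (volume Ω), ← mul_assoc]
    · have hφx : ∀ j, φ j x = 0 := fun j => Function.notMem_support.mp fun h => hxΩ (hsupp j h)
      simp [hφx]
  calc ∑ j, ∫⁻ p, ENNReal.ofReal (f p) * ENNReal.ofReal (‖φ j p.1‖ ^ 2 * ‖ft n (φ j) p.2‖ ^ 2)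
      ≤ ∫⁻ p, ∑ j, ENNReal.ofReal (f p) * ENNReal.ofReal (‖φ j p.1‖ ^ 2 * ‖ft n (φ j) p.2‖ ^ 2) :=
        sum_lintegral_le_lintegral_sum _ _ _
    _ ≤ ∫⁻ p, (Ω ×ˢ univ).indicator (fun q => c * ENNReal.ofReal (f q)) p :=
        lintegral_mono_ae hdensity
    _ = c * ∫⁻ p in Ω ×ˢ univ, ENNReal.ofReal (f p) := by
        rw [lintegral_indicator (hΩm.prod MeasurableSet.univ),
          lintegral_const_mul _ hf.ennreal_ofReal]

/-- for an orthonormal system `φ₁,…,φ_N` supported in a bounded set `Ω`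
with `|φ_j|² ≤ C` a.e., the phase-space measures satisfy the Berezin-type bound
`∑_j μ[φ_j](f) ≤ C |Ω| (2π)⁻ⁿ ∫_{Ω×ℝⁿ} f`. -/
theorem stmt_12 (n N : ℕ) (Ω : Set (Fin n → ℝ)) (hΩm : MeasurableSet Ω)
    (hΩb : Bornology.IsBounded Ω) (C : ℝ) (hC : 0 < C)
    (φ : Fin N → (Fin n → ℝ) → ℂ)
    (hL2 : ∀ j, MemLp (φ j) 2 (volume : Measure (Fin n → ℝ)))
    (horth : ∀ i j, (∫ x : Fin n → ℝ, (starRingEnd ℂ) (φ i x) * φ j x)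
        = if i = j then 1 else 0)
    (hsupp : ∀ j, Function.support (φ j) ⊆ Ω)
    (hbound : ∀ j, ∀ᵐ x ∂(volume : Measure (Fin n → ℝ)), ‖φ j x‖ ^ 2 ≤ C)
    (f : (Fin n → ℝ) × (Fin n → ℝ) → ℝ) (hf : Measurable f) (hf0 : ∀ p, 0 ≤ f p) :
    ∑ j, ∫⁻ p : (Fin n → ℝ) × (Fin n → ℝ),
        ENNReal.ofReal (f p) * ENNReal.ofReal (‖φ j p.1‖ ^ 2 * ‖ft n (φ j) p.2‖ ^ 2)
      ≤ ENNReal.ofReal C * volume Ω * ENNReal.ofReal ((2 * π) ^ (-(n : ℝ))) *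
        ∫⁻ p in Ω ×ˢ (Set.univ : Set (Fin n → ℝ)), ENNReal.ofReal (f p) :=
  stmt_12_general n N Ω hΩm hΩb C hC φ hL2 horth hsupp hbound f hf
end

section
/- Let P_m be a homogeneous harmonic polynomial of degree m on ℝⁿ. Then the Fourier transform of x ↦ P_m(x) e^{−|x|²/2} equals k ↦ (−i)^m P_m(k) e^{−|k|²/2}. -/
open MeasureTheory Real Set

/-!
Let `L(p) = ∫ p(x) ∏ⱼ e^{-i kⱼ xⱼ - xⱼ²/2} dx`, a linear functional on real polynomials.
Integration by parts in `xⱼ` gives `L(xⱼ p) = L(∂ⱼ p) - i kⱼ L(p)`; on monomials `L` factors into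
one-dimensional Gaussian moments, so this reduces to the recursion for those moments. For `p`
homogeneous of degree `m + 1` and harmonic, Euler's identity `∑ⱼ xⱼ ∂ⱼ p = (m + 1) p` and `Δp = 0`
turn the relation into `(m + 1) L(p) = -i ∑ⱼ kⱼ L(∂ⱼ p)`. The `∂ⱼ p` are again harmonic and
homogeneous, of degree `m`, so induction gives `L(p) = (-i)^m p(k) L(1)`, and
`L(1) = (2π)^{n/2} e^{-|k|²/2}` is the Gaussian integral.
-/

namespace MvPolynomial

variable {σ R : Type*} [CommRing R]

lemma pderiv_pderiv_comm (i j : σ) (p : MvPolynomial σ R) :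
    pderiv i (pderiv j p) = pderiv j (pderiv i p) := by
  classical
  have hbracket :
      ⁅pderiv i, pderiv j⁆ = (0 : Derivation R (MvPolynomial σ R) (MvPolynomial σ R)) :=
    derivation_ext fun l => by
      rw [Derivation.commutator_apply]
      simp [pderiv_X, Pi.single_apply, apply_ite]
  have := congr($hbracket p)
  rwa [Derivation.commutator_apply, Derivation.zero_apply, sub_eq_zero] at this

variable [Fintype σ]

noncomputable def laplacian (p : MvPolynomial σ R) : MvPolynomial σ R :=
  ∑ j, pderiv j (pderiv j p)

lemma laplacian_pderiv (i : σ) (p : MvPolynomial σ R) :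
    laplacian (pderiv i p) = pderiv i (laplacian p) := by
  simp only [laplacian, map_sum, pderiv_pderiv_comm i]

end MvPolynomial

open Complex

noncomputable def modulatedGaussian (κ x : ℝ) : ℂ := cexp (-(I * κ * x) - (x : ℂ) ^ 2 / 2)

noncomputable def gaussMoment (a : ℕ) (κ : ℝ) : ℂ :=
  ∫ x : ℝ, (x : ℂ) ^ a * modulatedGaussian κ x

lemma norm_pow_mul_modulatedGaussian (a : ℕ) (κ x : ℝ) :
    ‖(x : ℂ) ^ a * modulatedGaussian κ x‖ = |x| ^ a * Real.exp (-(1 / 2) * x ^ 2) := by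
  rw [modulatedGaussian, norm_mul, norm_exp, norm_pow, norm_real, Real.norm_eq_abs]
  congr 2
  simp [← ofReal_pow, div_eq_inv_mul]

lemma integrable_pow_mul_modulatedGaussian (a : ℕ) (κ : ℝ) :
    Integrable fun x : ℝ => (x : ℂ) ^ a * modulatedGaussian κ x := by
  have hbound : Integrable fun x : ℝ => |x| ^ a * Real.exp (-(1 / 2) * x ^ 2) := by
    refine (integrable_rpow_mul_exp_neg_mul_sq (b := 1 / 2) (s := a) (by norm_num)
      (by linarith [(Nat.cast_nonneg a : (0 : ℝ) ≤ a)])).abs.congr (.of_forall fun x => ?_)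
    simp [abs_mul, Real.rpow_natCast]
  have hcont : Continuous fun x : ℝ => (x : ℂ) ^ a * modulatedGaussian κ x := by
    unfold modulatedGaussian; fun_prop
  refine hbound.mono' hcont.aestronglyMeasurable (.of_forall fun x => ?_)
  rw [norm_pow_mul_modulatedGaussian]

lemma hasDerivAt_modulatedGaussian (κ x : ℝ) :
    HasDerivAt (modulatedGaussian κ) (-(I * κ + x) * modulatedGaussian κ x) x := by
  have hexponent : HasDerivAt (fun z : ℂ => -(I * κ * z) - z ^ 2 / 2) (-(I * κ + x)) x := by
    refine ((((hasDerivAt_id (x : ℂ)).const_mul (I * κ)).neg).sub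
      ((hasDerivAt_pow 2 (x : ℂ)).div_const 2)).congr_deriv ?_
    push_cast
    ring
  exact hexponent.cexp.comp_ofReal.congr_deriv (mul_comm _ _)

lemma gaussMoment_zero (κ : ℝ) : gaussMoment 0 κ = √(2 * π) * cexp (-(κ : ℂ) ^ 2 / 2) := by
  have hsqrt : ((π : ℂ) / -(-1 / 2)) ^ (1 / 2 : ℂ) = √(2 * π) := by
    rw [Real.sqrt_eq_rpow, ofReal_cpow (by positivity)]
    push_cast
    ring_nf
  calc gaussMoment 0 κ = ∫ x : ℝ, cexp (-1 / 2 * x ^ 2 + -(I * κ) * x + 0) := by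
        simp only [gaussMoment, modulatedGaussian, pow_zero, one_mul]
        congr 1; ext x; congr 1; ring
    _ = _ := integral_cexp_quadratic (by norm_num) _ _
    _ = √(2 * π) * cexp (-(κ : ℂ) ^ 2 / 2) := by
        rw [hsqrt]
        congr 2
        linear_combination (κ : ℂ) ^ 2 / 2 * I_sq

lemma gaussMoment_succ (a : ℕ) (κ : ℝ) :
    gaussMoment (a + 1) κ = a * gaussMoment (a - 1) κ - I * κ * gaussMoment a κ := by
  set g : ℕ → ℝ → ℂ := fun b x => (x : ℂ) ^ b * modulatedGaussian κ x
  have hg : ∀ b, Integrable (g b) := fun b => integrable_pow_mul_modulatedGaussian b κ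
  have hderiv : ∀ x, HasDerivAt (g a) (a * g (a - 1) x - I * κ * g a x - g (a + 1) x) x := by
    intro x
    refine ((hasDerivAt_pow a (x : ℂ)).comp_ofReal.mul
      (hasDerivAt_modulatedGaussian κ x)).congr_deriv ?_
    simp only [g]
    ring
  have h₁ : Integrable fun x => (a : ℂ) * g (a - 1) x := (hg _).const_mul _
  have h₂ : Integrable fun x => I * κ * g a x := (hg _).const_mul _
  have h₁₂ : Integrable fun x => (a : ℂ) * g (a - 1) x - I * κ * g a x := h₁.sub h₂
  have hzero := integral_eq_zero_of_hasDerivAt_of_integrable hderiv (h₁₂.sub (hg _)) (hg a)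
  rw [integral_sub h₁₂ (hg _), integral_sub h₁ h₂, integral_const_mul,
    integral_const_mul] at hzero
  unfold gaussMoment
  linear_combination -hzero

section GaussPairing

open MvPolynomial

variable {ι : Type*} [Fintype ι]

noncomputable def modulatedGaussianPi (k x : ι → ℝ) : ℂ := ∏ j, modulatedGaussian (k j) (x j)

lemma modulatedGaussianPi_eq (k x : ι → ℝ) :
    modulatedGaussianPi k x
      = cexp (-((∑ j, x j ^ 2 : ℝ) : ℂ) / 2) * cexp (-I * ((∑ j, k j * x j : ℝ) : ℂ)) := by
  unfold modulatedGaussianPi modulatedGaussian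
  rw [← Complex.exp_add, ← Complex.exp_sum]
  congr 1
  push_cast
  simp only [Finset.mul_sum, Finset.sum_div, ← Finset.sum_neg_distrib, ← Finset.sum_add_distrib]
  exact Finset.sum_congr rfl fun j _ => by ring

lemma eval_monomial_mul_modulatedGaussianPi (k x : ι → ℝ) (v : ι →₀ ℕ) (c : ℝ) :
    (eval x (monomial v c) : ℂ) * modulatedGaussianPi k x
      = c * ∏ j, (x j : ℂ) ^ v j * modulatedGaussian (k j) (x j) := by
  rw [eval_monomial, Finsupp.prod_fintype _ _ fun _ => pow_zero _, modulatedGaussianPi,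
    Finset.prod_mul_distrib]
  push_cast
  ring

lemma integrable_eval_mul_modulatedGaussianPi (k : ι → ℝ) (p : MvPolynomial ι ℝ) :
    Integrable fun x : ι → ℝ => (eval x p : ℂ) * modulatedGaussianPi k x := by
  induction p using MvPolynomial.induction_on' with
  | monomial v c =>
    simp_rw [eval_monomial_mul_modulatedGaussianPi]
    exact (Integrable.fintype_prod fun j =>
      integrable_pow_mul_modulatedGaussian (v j) (k j)).const_mul _
  | add p q hp hq =>
    simp only [map_add, ofReal_add, add_mul]
    exact hp.add hq

noncomputable def gaussPairing (k : ι → ℝ) : MvPolynomial ι ℝ →ₗ[ℝ] ℂ where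
  toFun p := ∫ x : ι → ℝ, (eval x p : ℂ) * modulatedGaussianPi k x
  map_add' p q := by
    simp only [map_add, ofReal_add, add_mul]
    exact integral_add (integrable_eval_mul_modulatedGaussianPi k p)
      (integrable_eval_mul_modulatedGaussianPi k q)
  map_smul' c p := by
    simp only [smul_eval, ofReal_mul, mul_assoc, integral_const_mul, RingHom.id_apply,
      real_smul]

lemma gaussPairing_monomial (k : ι → ℝ) (v : ι →₀ ℕ) (c : ℝ) :
    gaussPairing k (monomial v c) = c * ∏ j, gaussMoment (v j) (k j) := by
  simp only [gaussPairing, LinearMap.coe_mk, AddHom.coe_mk,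
    eval_monomial_mul_modulatedGaussianPi, integral_const_mul]
  exact congrArg _ (integral_fintype_prod_volume_eq_prod
    fun j (x : ℝ) => (x : ℂ) ^ v j * modulatedGaussian (k j) x)

lemma gaussPairing_one (k : ι → ℝ) :
    gaussPairing k 1 = (√(2 * π) : ℂ) ^ Fintype.card ι * cexp (-(∑ j, k j ^ 2 : ℝ) / 2) := by
  rw [one_def, gaussPairing_monomial]
  simp only [Finsupp.coe_zero, Pi.zero_apply, gaussMoment_zero, Finset.prod_mul_distrib,
    Finset.prod_const, Finset.card_univ, ← Complex.exp_sum, ofReal_one, one_mul]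
  push_cast
  rw [← Finset.sum_neg_distrib, Finset.sum_div]

lemma gaussPairing_X_mul (k : ι → ℝ) (j : ι) (p : MvPolynomial ι ℝ) :
    gaussPairing k (X j * p) = gaussPairing k (pderiv j p) - I * k j * gaussPairing k p := by
  classical
  induction p using MvPolynomial.induction_on' with
  | monomial v c =>
    set rest := ∏ i ∈ Finset.univ.erase j, gaussMoment (v i) (k i)
    have hsplit : ∀ w : ι →₀ ℕ, (∀ i ≠ j, w i = v i) →
        ∏ i, gaussMoment (w i) (k i) = gaussMoment (w j) (k j) * rest := fun w hw => by
      rw [← Finset.mul_prod_erase _ _ (Finset.mem_univ j)]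
      exact congrArg _ <| Finset.prod_congr rfl fun i hi => by
        rw [hw i (Finset.ne_of_mem_erase hi)]
    rw [← pow_one (X j), ← monomial_single_add, pderiv_monomial, gaussPairing_monomial,
      gaussPairing_monomial, gaussPairing_monomial,
      hsplit _ fun i hi => by simp [Finsupp.single_eq_of_ne hi],
      hsplit _ fun i hi => by simp [Finsupp.single_eq_of_ne hi], hsplit v fun _ _ => rfl]
    simp only [Finsupp.add_apply, Finsupp.tsub_apply, Finsupp.single_eq_same]
    rw [add_comm 1 (v j)]
    push_cast
    linear_combination (c : ℂ) * rest * gaussMoment_succ (v j) (k j)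
  | add p q hp hq =>
    simp only [mul_add, map_add, hp, hq]
    ring

theorem gaussPairing_eq_of_isHomogeneous_of_laplacian_eq_zero (k : ι → ℝ) {m : ℕ}
    {p : MvPolynomial ι ℝ} (hp : p.IsHomogeneous m) (hΔ : laplacian p = 0) :
    gaussPairing k p = (-I) ^ m * eval k p * gaussPairing k 1 := by
  induction m generalizing p with
  | zero =>
    rw [← totalDegree_zero_iff_isHomogeneous, totalDegree_eq_zero_iff_eq_C] at hp
    rw [hp, C_eq_smul_one, map_smul, smul_eval, map_one (eval k), real_smul, pow_zero, one_mul,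
      mul_one]
  | succ m ih =>
    have hpartial (j : ι) :
        gaussPairing k (pderiv j p) = (-I) ^ m * eval k (pderiv j p) * gaussPairing k 1 :=
      ih hp.pderiv (by rw [laplacian_pderiv, hΔ, map_zero])
    have heuler : ∑ j, (k j : ℂ) * eval k (pderiv j p) = (m + 1) * eval k p := by
      have := congrArg (eval k) hp.sum_X_mul_pderiv
      simp only [map_sum, map_mul, eval_X, nsmul_eq_mul, map_natCast] at this
      exact_mod_cast this
    have hrecursion : ((m : ℂ) + 1) * gaussPairing k p
        = -∑ j, I * k j * gaussPairing k (pderiv j p) := by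
      have := congrArg (gaussPairing k) hp.sum_X_mul_pderiv
      rw [map_sum, map_nsmul] at this
      simp only [gaussPairing_X_mul, Finset.sum_sub_distrib] at this
      rw [← map_sum, ← laplacian, hΔ, map_zero, zero_sub, nsmul_eq_mul] at this
      push_cast at this
      exact this.symm
    refine mul_left_cancel₀ (Nat.cast_add_one_ne_zero m : ((m : ℂ) + 1) ≠ 0) ?_
    calc ((m : ℂ) + 1) * gaussPairing k p
        = -∑ j, I * k j * gaussPairing k (pderiv j p) := hrecursion
      _ = -(I * (-I) ^ m * gaussPairing k 1) * ∑ j, (k j : ℂ) * eval k (pderiv j p) := by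
        simp only [hpartial, Finset.mul_sum, ← Finset.sum_neg_distrib]
        exact Finset.sum_congr rfl fun j _ => by ring
      _ = ((m : ℂ) + 1) * ((-I) ^ (m + 1) * eval k p * gaussPairing k 1) := by
        rw [heuler]
        ring

end GaussPairing

lemma rpow_neg_half_mul_sqrt_pow {a : ℝ} (ha : 0 < a) (n : ℕ) :
    a ^ (-(n : ℝ) / 2) * √a ^ n = 1 := by
  rw [Real.sqrt_eq_rpow, ← Real.rpow_natCast, ← Real.rpow_mul ha.le, ← Real.rpow_add ha]
  ring_nf
  exact Real.rpow_zero a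

/-- Hecke's identity: if `P` is a homogeneous harmonic polynomial of
degree `m` on `ℝⁿ`, then the Fourier transform of `x ↦ P(x) e^{−|x|²/2}` is
`k ↦ (−i)^m P(k) e^{−|k|²/2}`. -/
theorem stmt_19 (n m : ℕ) (P : MvPolynomial (Fin n) ℝ)
    (hhom : P.IsHomogeneous m)
    (hharm : (∑ j, MvPolynomial.pderiv j (MvPolynomial.pderiv j P)) = 0) :
    ∀ k : Fin n → ℝ,
      ft n (fun x => ((MvPolynomial.eval x P : ℝ) : ℂ) *
          Complex.exp (-(((∑ j, (x j) ^ 2 : ℝ) : ℂ)) / 2)) k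
        = (-Complex.I) ^ m * ((MvPolynomial.eval k P : ℝ) : ℂ) *
          Complex.exp (-(((∑ j, (k j) ^ 2 : ℝ) : ℂ)) / 2) := by
  intro k
  have hft : ft n (fun x => ((MvPolynomial.eval x P : ℝ) : ℂ) *
      cexp (-(((∑ j, (x j) ^ 2 : ℝ) : ℂ)) / 2)) k
        = ((2 * π) ^ (-(n : ℝ) / 2) : ℝ) * gaussPairing k P := by
    simp only [ft, real_smul, gaussPairing, LinearMap.coe_mk, AddHom.coe_mk,
      modulatedGaussianPi_eq, mul_assoc]
  have hnorm := congrArg ((↑) : ℝ → ℂ) (rpow_neg_half_mul_sqrt_pow (by positivity : 0 < 2 * π) n)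
  push_cast at hnorm
  rw [hft, gaussPairing_eq_of_isHomogeneous_of_laplacian_eq_zero k hhom hharm, gaussPairing_one,
    Fintype.card_fin]
  linear_combination (-I) ^ m * (MvPolynomial.eval k P : ℂ) *
    cexp (-(((∑ j, (k j) ^ 2 : ℝ) : ℂ)) / 2) * hnorm
end
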